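/- Let T be a rooted ordered tree and v a vertex numbered k in the Trav-based numbering. If ν_v^{(1)} is even then k = ν_v^{(1)}/2 + 1, otherwise k = ν_v^{(2)}/2 + 1. -/

import Mathlib

/-- A finite rooted ordered tree: a root with an ordered list of subtrees. -/
inductive OTree : Type where
  | node : List OTree → OTree

mutual
/-- The visit sequence of the traversal `Trav` of the subtree rooted at the
vertex with address `a`; each vertex is visited exactly twice. -/
def trav : OTree → List ℕ → List (List ℕ)
  | .node [], a => [a, a]
  | .node (t :: ts), a => a :: (travList (t :: ts) a 0 ++ [a])

def travList : List OTree → List ℕ → ℕ → List (List ℕ)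
  | [], _, _ => []
  | t :: ts, a, i => trav t (a ++ [i]) ++ travList ts a (i + 1)
end

/-- `ν_v⁽¹⁾`: the number of visits strictly before the first visit to `v`. -/
def nu1 (t : OTree) (a : List ℕ) : ℕ := (trav t []).idxOf a

/-- `ν_v⁽²⁾`: the number of visits strictly before the second visit to `v`. -/
def nu2 (t : OTree) (a : List ℕ) : ℕ :=
  nu1 t a + 1 + ((trav t []).drop (nu1 t a + 1)).idxOf a

/-- Elements at even positions of a list. -/
def evens {α : Type*} : List α → List α
  | [] => []
  | [a] => [a]
  | a :: _ :: rest => a :: evens rest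

/-!
Every vertex occurs exactly twice in `Trav`, and between its two visits lie the visits of its
proper descendants, an even number since each of them is visited twice. Hence exactly one of the
two visits sits at an even position: the first if `ν⁽¹⁾` is even, and otherwise the second, at
`ν⁽²⁾ = ν⁽¹⁾ + 1 + (even)`. As `evens` keeps the positions `0, 2, 4, …`, the visit at even
position `2m` becomes entry `m` of the numbering.
-/

namespace List

variable {α : Type*}

theorem length_evens (l : List α) : (evens l).length = (l.length + 1) / 2 := by
  match l with
  | [] | [_] => simp [evens]
  | _ :: _ :: rest =>
    simp only [evens, length_cons, length_evens rest]
    omega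

theorem evens_sublist (l : List α) : evens l <+ l := by
  match l with
  | [] | [_] => simp [evens]
  | a :: _ :: rest => exact ((evens_sublist rest).cons _).cons_cons a

theorem evens_append_of_even_length {l₁ : List α} (h : Even l₁.length) (l₂ : List α) :
    evens (l₁ ++ l₂) = evens l₁ ++ evens l₂ := by
  match l₁, h with
  | [], _ => simp [evens]
  | [_], h => simp at h
  | a :: b :: rest, h =>
    have hrest : Even rest.length := by simpa [Nat.even_add_one] using h
    simp [evens, evens_append_of_even_length hrest l₂]

variable [BEq α] [LawfulBEq α]

theorem idxOf_append_cons_of_notMem {a : α} {l : List α} (h : a ∉ l) (r : List α) :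
    (l ++ a :: r).idxOf a = l.length := by
  simp [idxOf_append_of_notMem h]

theorem idxOf_evens_append_cons {a : α} {l : List α} (hl : Even l.length) (ha : a ∉ evens l)
    (r : List α) : (evens (l ++ a :: r)).idxOf a = l.length / 2 := by
  have hhead : (evens (a :: r)).idxOf a = 0 := by
    rcases r with _ | ⟨_, _⟩ <;> simp [evens]
  rw [evens_append_of_even_length hl, idxOf_append_of_notMem ha, hhead, length_evens]
  grind

theorem idxOf_evens_of_even_gap {a : α} {l₁ l₂ : List α} (h₁ : a ∉ l₁) (h₂ : a ∉ l₂)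
    (hgap : Even l₂.length) (l₃ : List α) :
    (evens (l₁ ++ a :: (l₂ ++ a :: l₃))).idxOf a =
      if Even l₁.length then l₁.length / 2 else (l₁.length + 1 + l₂.length) / 2 := by
  split_ifs with hl₁
  · exact idxOf_evens_append_cons hl₁ (fun h => h₁ ((evens_sublist l₁).subset h)) _
  · obtain ⟨l₀, b, rfl⟩ := (eq_nil_or_concat' l₁).resolve_left (by rintro rfl; simp at hl₁)
    have hl₀ : Even l₀.length := by simpa [Nat.even_add_one] using hl₁
    have hnot : a ∉ evens (l₀ ++ b :: a :: l₂) := by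
      rw [evens_append_of_even_length hl₀]
      simp only [evens, mem_append, mem_cons, not_or]
      exact ⟨fun h => h₁ (mem_append_left _ ((evens_sublist l₀).subset h)),
        fun h => h₁ (by simp [h]), fun h => h₂ ((evens_sublist l₂).subset h)⟩
    have := idxOf_evens_append_cons (l := l₀ ++ b :: a :: l₂) (by simp; grind) hnot l₃
    simp only [append_assoc, cons_append, nil_append, length_append, length_cons,
      length_nil] at this ⊢
    rw [this]
    omega

end List

mutual
theorem even_length_trav (t : OTree) (b : List ℕ) : Even (trav t b).length := by
  match t with
  | .node [] => simp [trav]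
  | .node (t :: ts) =>
    obtain ⟨k, hk⟩ := even_length_travList (t :: ts) b 0
    exact ⟨k + 1, by simp [trav, hk]; omega⟩

theorem even_length_travList (ts : List OTree) (b : List ℕ) (i : ℕ) :
    Even (travList ts b i).length := by
  match ts with
  | [] => simp [travList]
  | t :: ts =>
    simpa [travList] using (even_length_trav t (b ++ [i])).add (even_length_travList ts b (i + 1))
end

mutual
theorem length_le_of_mem_trav {t : OTree} {b c : List ℕ} (h : c ∈ trav t b) :
    b.length ≤ c.length := by
  match t with
  | .node [] =>
    obtain rfl : c = b := by simpa [trav] using h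
    rfl
  | .node (t :: ts) =>
    obtain rfl | h | rfl : c = b ∨ c ∈ travList (t :: ts) b 0 ∨ c = b := by simpa [trav] using h
    · rfl
    · exact (length_lt_of_mem_travList h).le
    · rfl

theorem length_lt_of_mem_travList {ts : List OTree} {b : List ℕ} {i : ℕ} {c : List ℕ}
    (h : c ∈ travList ts b i) : b.length < c.length := by
  match ts with
  | [] => simp [travList] at h
  | t :: ts =>
    rcases List.mem_append.mp h with h | h
    · simpa using length_le_of_mem_trav h
    · exact length_lt_of_mem_travList h
end

theorem notMem_travList_self (ts : List OTree) (b : List ℕ) (i : ℕ) : b ∉ travList ts b i :=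
  fun h => (length_lt_of_mem_travList h).false

def OccursTwiceEvenGap (L : List (List ℕ)) (a : List ℕ) : Prop :=
  ∃ l₁ l₂ l₃, L = l₁ ++ a :: (l₂ ++ a :: l₃) ∧ a ∉ l₁ ∧ a ∉ l₂ ∧ Even l₂.length

namespace OccursTwiceEvenGap

variable {L : List (List ℕ)} {a : List ℕ}

theorem append_left (h : OccursTwiceEvenGap L a) {l : List (List ℕ)} (hl : a ∉ l) :
    OccursTwiceEvenGap (l ++ L) a := by
  obtain ⟨l₁, l₂, l₃, rfl, h₁, h₂, hgap⟩ := h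
  exact ⟨l ++ l₁, l₂, l₃, by simp, by simp [hl, h₁], h₂, hgap⟩

theorem append_right (h : OccursTwiceEvenGap L a) (l : List (List ℕ)) :
    OccursTwiceEvenGap (L ++ l) a := by
  obtain ⟨l₁, l₂, l₃, rfl, h₁, h₂, hgap⟩ := h
  exact ⟨l₁, l₂, l₃ ++ l, by simp, h₁, h₂, hgap⟩

end OccursTwiceEvenGap

mutual
theorem occursTwiceEvenGap_trav {t : OTree} {b a : List ℕ} (h : a ∈ trav t b) :
    OccursTwiceEvenGap (trav t b) a := by
  match t with
  | .node [] =>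
    obtain rfl : a = b := by simpa [trav] using h
    exact ⟨[], [], [], rfl, List.not_mem_nil, List.not_mem_nil, Even.zero⟩
  | .node (t :: ts) =>
    by_cases hab : a = b
    · subst hab
      exact ⟨[], travList (t :: ts) a 0, [], by simp [trav], List.not_mem_nil,
        notMem_travList_self _ _ _, even_length_travList _ _ _⟩
    · have h' : a ∈ travList (t :: ts) b 0 := by simpa [trav, hab] using h
      simpa [trav] using
        ((occursTwiceEvenGap_travList h').append_right [b]).append_left (l := [b]) (by simpa)

theorem occursTwiceEvenGap_travList {ts : List OTree} {b : List ℕ} {i : ℕ} {a : List ℕ}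
    (h : a ∈ travList ts b i) : OccursTwiceEvenGap (travList ts b i) a := by
  match ts with
  | [] => simp [travList] at h
  | t :: ts =>
    by_cases hm : a ∈ trav t (b ++ [i])
    · exact (occursTwiceEvenGap_trav hm).append_right _
    · have h' : a ∈ travList ts b (i + 1) := by simpa [travList, hm] using h
      exact (occursTwiceEvenGap_travList h').append_left hm
end

/-- In the `Trav`-based numbering (vertices ordered by their unique visit that
is preceded by an even number of visits), the number `k` of a vertex `v` is
`ν_v⁽¹⁾/2 + 1` if `ν_v⁽¹⁾` is even, and `ν_v⁽²⁾/2 + 1` otherwise. -/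
theorem trav_number_formula (t : OTree) (a : List ℕ) (ha : a ∈ trav t []) :
    (evens (trav t [])).idxOf a + 1 =
      if Even (nu1 t a) then nu1 t a / 2 + 1 else nu2 t a / 2 + 1 := by
  obtain ⟨l₁, l₂, l₃, e, h₁, h₂, hgap⟩ := occursTwiceEvenGap_trav ha
  have hnu1 : nu1 t a = l₁.length := by rw [nu1, e, List.idxOf_append_cons_of_notMem h₁]
  have hnu2 : nu2 t a = l₁.length + 1 + l₂.length := by
    simp [nu2, hnu1, e, List.idxOf_append_cons_of_notMem h₂]
  rw [hnu1, hnu2, e, List.idxOf_evens_of_even_gap h₁ h₂ hgap]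
  split_ifs <;> rfl
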